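/- For all real numbers pA0, pA1, a01, b01, p00, p01, p10, p11: if the 5×5 real symmetric matrix T whose upper-triangular entries (rows and columns indexed 1–5) are row 1: (1, pA0, pA1, 0, 0); row 2 (from the diagonal): (pA0, a01, p00, p01); row 3: (pA1, p10, p11); row 4: (0, b01); row 5: (0), is positive semidefinite, then −pA0 + p00 + p01 + p10 − p11 ≤ 0. Moreover, there exist values of the parameters for which T is positive semidefinite and −pA0 + p00 + p01 + p10 − p11 = 0, so the maximum of this objective over positive semidefinite matrices of this form equals 0. -/

import Mathlib

noncomputable def T (pA0 pA1 a01 b01 p00 p01 p10 p11 : ℝ) :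
    Matrix (Fin 5) (Fin 5) ℝ :=
  !![1, pA0, pA1, 0, 0;
     pA0, pA0, a01, p00, p01;
     pA1, a01, pA1, p10, p11;
     0, p00, p10, 0, b01;
     0, p01, p11, b01, 0]

/-!
The rows of `T` indexed by `p_B(0)` and `p_B(1)` have zero diagonal entry, and a positive
semidefinite matrix with a zero diagonal entry vanishes on the whole row. Hence
`p00 = p01 = p10 = p11 = 0` and the objective is `-pA0 = -T 1 1 ≤ 0`; the value `0` is attained
at the rank-one matrix `T 0 … 0 = diag(1, 0, 0, 0, 0)`.
-/

lemma eq_zero_of_forall_add_mul_nonneg {a b : ℝ} (h : ∀ t : ℝ, 0 ≤ a + t * b) : b = 0 := by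
  by_contra hb
  have := h (-(a + 1) / b)
  rw [div_mul_cancel₀ _ hb] at this
  linarith

namespace Matrix.PosSemidef

theorem apply_eq_zero_of_diag_eq_zero {n : Type*} {A : Matrix n n ℝ} (hA : A.PosSemidef)
    {i j : n} (hii : A i i = 0) : A i j = 0 := by
  have hji : A j i = A i j := by simpa using hA.isHermitian.apply i j
  -- the quadratic form of `A` on `t • eᵢ + eⱼ` is `A j j + 2 t A i j`
  have hform (t : ℝ) : 0 ≤ A j j + t * (2 * A i j) := by
    have := (hA.submatrix ![i, j]).dotProduct_mulVec_nonneg ![t, 1]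
    simp only [dotProduct, mulVec, Fin.sum_univ_two, submatrix_apply] at this
    simp only [Matrix.cons_val_zero, Matrix.cons_val_one, star_trivial, hii, hji] at this
    linarith
  simpa using eq_zero_of_forall_add_mul_nonneg hform

end Matrix.PosSemidef

theorem stmt12 :
    (∀ pA0 pA1 a01 b01 p00 p01 p10 p11 : ℝ,
        (T pA0 pA1 a01 b01 p00 p01 p10 p11).PosSemidef →
          -pA0 + p00 + p01 + p10 - p11 ≤ 0) ∧
    (∃ pA0 pA1 a01 b01 p00 p01 p10 p11 : ℝ,
        (T pA0 pA1 a01 b01 p00 p01 p10 p11).PosSemidef ∧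
          -pA0 + p00 + p01 + p10 - p11 = 0) := by
  constructor
  · intro pA0 pA1 a01 b01 p00 p01 p10 p11 hT
    have hp00 : p00 = 0 := hT.apply_eq_zero_of_diag_eq_zero (i := 3) (j := 1) rfl
    have hp10 : p10 = 0 := hT.apply_eq_zero_of_diag_eq_zero (i := 3) (j := 2) rfl
    have hp01 : p01 = 0 := hT.apply_eq_zero_of_diag_eq_zero (i := 4) (j := 1) rfl
    have hp11 : p11 = 0 := hT.apply_eq_zero_of_diag_eq_zero (i := 4) (j := 2) rfl
    have hpA0 : 0 ≤ pA0 := hT.diag_nonneg (i := 1)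
    linarith
  · refine ⟨0, 0, 0, 0, 0, 0, 0, 0, ?_, by ring⟩
    have hdiag : T 0 0 0 0 0 0 0 0 = Matrix.diagonal ![1, 0, 0, 0, 0] := by
      ext i j
      fin_cases i <;> fin_cases j <;> rfl
    rw [hdiag, Matrix.posSemidef_diagonal_iff]
    intro i
    fin_cases i <;> norm_num
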